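/- Let F^B_x be a pattern on n_B × m_B matrices over a field with every determined entry equal to 0 or 1, and for each j ∈ Fin m_B let F^{(j)}_x be a pattern on n_j × m_j matrices. Define the jointly extended pattern F^E_x whose (i,j)-th block (for i ∈ Fin n_B, j ∈ Fin m_B) equals: F^{(j)}_x if F^B_x(i,j) = some 1; the all-zero determined pattern if F^B_x(i,j) = some 0; and the all-unknown pattern if F^B_x(i,j) = none. Suppose M_x is a square subpattern of F^B_x, obtained by restricting to row set R and column set C with |R| = |C|, that is upper-triangulable with unit diagonal (after permutations of its rows and columns it has some 1 on the diagonal and some 0 strictly below). Then minrank(F^E_x) ≥ Σ_{j ∈ C} minrank(F^{(j)}_x). -/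

import Mathlib

/-- A pattern: a partially specified matrix, `none` denoting an unknown entry. -/
def Pattern (α β F : Type*) := α → β → Option F

/-- A matrix `M` completes a pattern `A` if it agrees with all determined entries. -/
def Completes {α β F : Type*} (M : Matrix α β F) (A : Pattern α β F) : Prop :=
  ∀ i j c, A i j = some c → M i j = c

/-- The minrank of a pattern: the minimum rank over all its completions. -/
noncomputable def minrank {α β F : Type*} [Fintype α] [Fintype β] [Field F]
    (A : Pattern α β F) : ℕ :=
  sInf {r | ∃ M : Matrix α β F, Completes M A ∧ M.rank = r}

/-!
Take a completion `M` of the extended pattern of minimal rank and keep only the row blocks `ρ`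
and column blocks `γ`. After ordering them by `σ` and `τ`, this submatrix is block upper
triangular: the blocks below the diagonal come from `some 0` entries of the base pattern, and
each diagonal block completes the corresponding component pattern `Fj`. Columns chosen
independently inside each diagonal block stay independent in the whole matrix (by downward
induction on the block index), so the rank of `M` is at least the sum of the ranks of the
diagonal blocks, each of which is at least a component minrank.
-/

open Module Submodule Matrix

section Minrank

variable {α β F : Type*} [Fintype α] [Fintype β] [Field F]

theorem minrank_le_rank {A : Pattern α β F} {M : Matrix α β F} (hM : Completes M A) :
    minrank A ≤ M.rank :=
  Nat.sInf_le ⟨M, hM, rfl⟩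

theorem exists_completes_rank_eq_minrank (A : Pattern α β F) :
    ∃ M : Matrix α β F, Completes M A ∧ M.rank = minrank A :=
  Nat.sInf_mem (s := {r | ∃ M : Matrix α β F, Completes M A ∧ M.rank = r})
    ⟨_, fun i j => (A i j).getD 0, fun i j c hc => by simp [hc], rfl⟩

end Minrank

namespace Matrix

variable {F : Type*} [Field F]

theorem exists_linearIndependent_cols {m n : Type*} [Fintype m] [Fintype n] (A : Matrix m n F) :
    ∃ t : Fin A.rank → n, LinearIndependent F (A.col ∘ t) := by
  obtain ⟨κ, a, ha, hspan, hli⟩ := exists_linearIndependent' F A.col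
  have : Fintype κ := Fintype.ofInjective a ha
  have hcard : Fintype.card κ = A.rank := by
    rw [rank_eq_finrank_span_cols, ← hspan, finrank_span_eq_card hli]
  let e := Fintype.equivFinOfCardEq hcard
  exact ⟨a ∘ e.symm, hli.comp e.symm e.symm.injective⟩

variable {ι : Type*} [Fintype ι] [LinearOrder ι] {m n : ι → Type*}

theorem linearIndependent_sigma_cols_of_blockTriangular {κ : ι → Type*} [∀ k, Fintype (κ k)]
    (M : Matrix (Σ k, m k) (Σ k, n k) F)
    (hM : ∀ k k', k' < k → ∀ a b, M ⟨k, a⟩ ⟨k', b⟩ = 0)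
    (t : ∀ k, κ k → n k) (ht : ∀ k, LinearIndependent F ((M.blockDiag' k).col ∘ t k)) :
    LinearIndependent F (fun p : Σ k, κ k => M.col ⟨p.1, t p.1 p.2⟩) := by
  classical
  rw [Fintype.linearIndependent_iff]
  intro g hg
  suffices ∀ k a, g ⟨k, a⟩ = 0 from fun p => this p.1 p.2
  intro k
  induction k using WellFoundedGT.induction with
  | ind k ih =>
    refine Fintype.linearIndependent_iff.mp (ht k) (fun a => g ⟨k, a⟩) ?_
    funext row
    have hrow := congrFun hg ⟨k, row⟩
    simp only [Finset.sum_apply, Pi.smul_apply, smul_eq_mul, Pi.zero_apply,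
      Fintype.sum_sigma] at hrow ⊢
    rw [Fintype.sum_eq_single k] at hrow
    · exact hrow
    intro k' hk'
    refine Finset.sum_eq_zero fun a _ => ?_
    rcases hk'.lt_or_gt with hlt | hgt
    · simp [col_apply, hM k k' hlt]
    · simp [ih k' hgt a]

theorem sum_rank_blockDiag'_le_rank_of_blockTriangular [∀ k, Fintype (m k)] [∀ k, Fintype (n k)]
    (M : Matrix (Σ k, m k) (Σ k, n k) F)
    (hM : ∀ k k', k' < k → ∀ a b, M ⟨k, a⟩ ⟨k', b⟩ = 0) :
    ∑ k, (M.blockDiag' k).rank ≤ M.rank := by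
  choose t ht using fun k => (M.blockDiag' k).exists_linearIndependent_cols
  have hli := linearIndependent_sigma_cols_of_blockTriangular M hM t ht
  calc ∑ k, (M.blockDiag' k).rank
      = Fintype.card (Σ k, Fin (M.blockDiag' k).rank) := by simp
    _ = finrank F (span F (Set.range fun p : Σ k, Fin (M.blockDiag' k).rank =>
          M.col ⟨p.1, t p.1 p.2⟩)) := (finrank_span_eq_card hli).symm
    _ ≤ finrank F (span F (Set.range M.col)) :=
        finrank_mono (span_mono (Set.range_subset_iff.mpr fun p => ⟨_, rfl⟩))
    _ = M.rank := (rank_eq_finrank_span_cols M).symm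

end Matrix

theorem minrank_extension_lower_bound_general {F : Type*} [Field F] (nB mB : ℕ)
    (FB : Pattern (Fin nB) (Fin mB) F)
    (nj mj : Fin mB → ℕ) (h : Fin nB → ℕ)
    (Fj : (j : Fin mB) → Pattern (Fin (nj j)) (Fin (mj j)) F)
    (heq : ∀ i j, FB i j = some 1 → h i = nj j)
    (E : Pattern ((i : Fin nB) × Fin (h i)) ((j : Fin mB) × Fin (mj j)) F)
    (hE1 : ∀ (i : Fin nB) (j : Fin mB) (hij : FB i j = some 1) (a : Fin (h i)) (b : Fin (mj j)),
      E ⟨i, a⟩ ⟨j, b⟩ = Fj j (Fin.cast (heq i j hij) a) b)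
    (hE0 : ∀ (i : Fin nB) (j : Fin mB), FB i j = some 0 →
      ∀ (a : Fin (h i)) (b : Fin (mj j)), E ⟨i, a⟩ ⟨j, b⟩ = some 0)
    (s : ℕ) (ρ : Fin s ↪ Fin nB) (γ : Fin s ↪ Fin mB)
    (σ τ : Equiv.Perm (Fin s))
    (hdiag : ∀ i : Fin s, FB (ρ (σ i)) (γ (τ i)) = some 1)
    (hlow : ∀ i j : Fin s, j < i → FB (ρ (σ i)) (γ (τ j)) = some 0) :
    ∑ i : Fin s, minrank (Fj (γ i)) ≤ minrank E := by
  obtain ⟨M, hM, hMrank⟩ := exists_completes_rank_eq_minrank E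
  let N : Matrix (Σ k : Fin s, Fin (h (ρ (σ k)))) (Σ k : Fin s, Fin (mj (γ (τ k)))) F :=
    M.submatrix (fun p => ⟨ρ (σ p.1), p.2⟩) (fun p => ⟨γ (τ p.1), p.2⟩)
  have hN : ∀ k k', k' < k → ∀ a b, N ⟨k, a⟩ ⟨k', b⟩ = 0 := fun k k' hlt a b =>
    hM _ _ 0 (hE0 _ _ (hlow k k' hlt) a b)
  have hblock : ∀ k, minrank (Fj (γ (τ k))) ≤ (N.blockDiag' k).rank := fun k => by
    rw [← rank_submatrix (N.blockDiag' k) (finCongr (heq _ _ (hdiag k)).symm) (Equiv.refl _)]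
    exact minrank_le_rank fun a b c hc => hM _ _ c (by simpa [hE1 _ _ (hdiag k)] using hc)
  calc ∑ i, minrank (Fj (γ i))
      = ∑ k, minrank (Fj (γ (τ k))) := (Equiv.sum_comp τ _).symm
    _ ≤ ∑ k, (N.blockDiag' k).rank := Finset.sum_le_sum fun k _ => hblock k
    _ ≤ N.rank := sum_rank_blockDiag'_le_rank_of_blockTriangular N hN
    _ ≤ M.rank := rank_submatrix_le M _ _
    _ = minrank E := hMrank

/-- Lower bound (Lemma 1): if the base pattern `FB` contains a square subpattern on rows `ρ`
and columns `γ` that is upper-triangulable with unit diagonal, then the minrank of the jointly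
extended pattern `E` is at least the sum of the minranks of the component patterns indexed by
the columns of the subpattern. -/
theorem minrank_extension_lower_bound {F : Type*} [Field F] (nB mB : ℕ)
    (FB : Pattern (Fin nB) (Fin mB) F)
    (hFB01 : ∀ i j c, FB i j = some c → c = 0 ∨ c = 1)
    (nj mj : Fin mB → ℕ) (h : Fin nB → ℕ)
    (Fj : (j : Fin mB) → Pattern (Fin (nj j)) (Fin (mj j)) F)
    (heq : ∀ i j, FB i j = some 1 → h i = nj j)
    (E : Pattern ((i : Fin nB) × Fin (h i)) ((j : Fin mB) × Fin (mj j)) F)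
    (hE1 : ∀ (i : Fin nB) (j : Fin mB) (hij : FB i j = some 1) (a : Fin (h i)) (b : Fin (mj j)),
      E ⟨i, a⟩ ⟨j, b⟩ = Fj j (Fin.cast (heq i j hij) a) b)
    (hE0 : ∀ (i : Fin nB) (j : Fin mB), FB i j = some 0 →
      ∀ (a : Fin (h i)) (b : Fin (mj j)), E ⟨i, a⟩ ⟨j, b⟩ = some 0)
    (hEx : ∀ (i : Fin nB) (j : Fin mB), FB i j = none →
      ∀ (a : Fin (h i)) (b : Fin (mj j)), E ⟨i, a⟩ ⟨j, b⟩ = none)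
    (s : ℕ) (ρ : Fin s ↪ Fin nB) (γ : Fin s ↪ Fin mB)
    (σ τ : Equiv.Perm (Fin s))
    (hdiag : ∀ i : Fin s, FB (ρ (σ i)) (γ (τ i)) = some 1)
    (hlow : ∀ i j : Fin s, j < i → FB (ρ (σ i)) (γ (τ j)) = some 0) :
    ∑ i : Fin s, minrank (Fj (γ i)) ≤ minrank E :=
  minrank_extension_lower_bound_general nB mB FB nj mj h Fj heq E hE1 hE0 s ρ γ σ τ hdiag hlow
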